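/- Let X and X' be infinite subsets of ℕ with X' ⊆ X, and suppose that for every m ∈ ℕ there exists k ∈ ℕ such that the interval I(X', k) contains at least m of the intervals I(X, j). Then F_{X'} is a proper subset of F_X; that is, there exists α ∈ F_X with α ∉ F_{X'}. -/

import Mathlib

open Filter Topology MultiplierAlgebra

noncomputable section

/-- `Δ_I(α,β) = max_{i,j ∈ I} |α(i)·conj(α(j)) − β(i)·conj(β(j))|`
(the maximum over the empty set being `0`). -/
def Delta (I : Finset ℕ) (α β : ℕ → Circle) : ℝ :=
  ((I ×ˢ I).sup fun p : ℕ × ℕ =>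
    ‖(α p.1 : ℂ) * (starRingEnd ℂ) (α p.2 : ℂ) -
      (β p.1 : ℂ) * (starRingEnd ℂ) (β p.2 : ℂ)‖₊ : NNReal)

/-- `n(X,j)`: the `j`-th element of `{0} ∪ X` in increasing order. -/
def nEnum (X : Set ℕ) (j : ℕ) : ℕ := Nat.nth (· ∈ insert 0 X) j

/-- `I(X,j) = [n(X,j), n(X,j+1))`, as a finite set of naturals. -/
def intvl (X : Set ℕ) (j : ℕ) : Finset ℕ := Finset.Ico (nEnum X j) (nEnum X (j + 1))

/-- Membership in `F_X`: `lim_j Δ_{I(X,j) ∪ I(X,j+1)}(α, 1) = 0`. -/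
def memF (X : Set ℕ) (α : ℕ → Circle) : Prop :=
  Tendsto (fun j => Delta (intvl X j ∪ intvl X (j + 1)) α 1) atTop (𝓝 0)

/-- `Y ⊆* X`: almost inclusion, i.e. `Y \ X` is finite. -/
def AlmostSubset (Y X : Set ℕ) : Prop := (Y \ X).Finite

/-!
Each `I(X, j) ∪ I(X, j + 1)` lies inside `I(X', k) ∪ I(X', k + 1)` for the `X'`-block `k`
containing `I(X, j)`, and `k → ∞` as `j → ∞`; hence `F_{X'} ⊆ F_X`.

For the separating element take `α = exp (i φ(j))` on `I(X, j)`, where `φ` grows by `π / M_k`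
per `X`-block inside `I(X', k)`, `M_k` being the largest number of `X`-blocks in any of
`I(X', 0), …, I(X', k)`. The hypothesis makes these numbers unbounded, so `M_k → ∞`: the
increments of `φ` tend to `0` and `α ∈ F_X`. But `I(X', k)` attains the record `M_k` infinitely
often, and across such a block `φ` grows by exactly `π`; the left endpoints of `I(X', k)` and
`I(X', k + 1)` then give `Δ = 2`, so `α ∉ F_{X'}`.
-/

open Finset ComplexConjugate Real

section Delta

variable {I J : Finset ℕ} {α β : ℕ → Circle}

lemma Delta_nonneg : 0 ≤ Delta I α β := NNReal.coe_nonneg _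

lemma Delta_mono (h : I ⊆ J) : Delta I α β ≤ Delta J α β :=
  NNReal.coe_le_coe.mpr (sup_mono (product_subset_product h h))

lemma norm_sub_le_Delta {i j : ℕ} (hi : i ∈ I) (hj : j ∈ I) :
    ‖(α i : ℂ) * conj (α j : ℂ) - (β i : ℂ) * conj (β j : ℂ)‖ ≤ Delta I α β :=
  NNReal.coe_le_coe.mpr <| le_sup (f := fun p : ℕ × ℕ =>
    ‖(α p.1 : ℂ) * conj (α p.2 : ℂ) - (β p.1 : ℂ) * conj (β p.2 : ℂ)‖₊)
    (mk_mem_product hi hj)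

lemma Delta_le {c : ℝ} (hc : 0 ≤ c)
    (h : ∀ i ∈ I, ∀ j ∈ I,
      ‖(α i : ℂ) * conj (α j : ℂ) - (β i : ℂ) * conj (β j : ℂ)‖ ≤ c) :
    Delta I α β ≤ c := by
  rw [Delta, ← Real.coe_toNNReal c hc, NNReal.coe_le_coe, Finset.sup_le_iff]
  rintro ⟨i, j⟩ hij
  rw [mem_product] at hij
  rw [← NNReal.coe_le_coe, coe_nnnorm, Real.coe_toNNReal c hc]
  exact h i hij.1 j hij.2

end Delta

lemma coe_circleExp_mul_conj (x y : ℝ) :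
    (Circle.exp x : ℂ) * conj (Circle.exp y : ℂ) = Circle.exp (x - y) := by
  rw [← Circle.coe_inv_eq_conj, ← Circle.coe_mul, ← div_eq_mul_inv, Circle.exp_sub]

lemma norm_coe_circleExp_sub_one_le (t : ℝ) : ‖(Circle.exp t : ℂ) - 1‖ ≤ |t| := by
  rw [Circle.coe_exp, mul_comm]
  exact Real.norm_exp_I_mul_ofReal_sub_one_le

lemma norm_coe_circleExp_pi_sub_one : ‖(Circle.exp π : ℂ) - 1‖ = 2 := by
  rw [Circle.coe_exp, Complex.exp_pi_mul_I]
  norm_num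

section Blocks

variable {X : Set ℕ} {i j : ℕ}

lemma infinite_ofPred_mem_insert_zero (hX : X.Infinite) :
    (Set.ofPred (· ∈ insert 0 X)).Infinite :=
  hX.mono (Set.subset_insert 0 X)

lemma nEnum_strictMono (hX : X.Infinite) : StrictMono (nEnum X) :=
  Nat.nth_strictMono (infinite_ofPred_mem_insert_zero hX)

lemma nEnum_mem (hX : X.Infinite) (j : ℕ) : nEnum X j ∈ insert 0 X :=
  Nat.nth_mem_of_infinite (infinite_ofPred_mem_insert_zero hX) j

open Classical in
def blockIdx (X : Set ℕ) (i : ℕ) : ℕ := Nat.count (· ∈ insert 0 X) (i + 1) - 1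

lemma mem_intvl_iff (hX : X.Infinite) : i ∈ intvl X j ↔ blockIdx X i = j := by
  classical
  have hinf := infinite_ofPred_mem_insert_zero hX
  have hpos : 1 ≤ Nat.count (· ∈ insert 0 X) (i + 1) := by
    have := Nat.count_monotone (· ∈ insert 0 X) (Nat.le_add_left 1 i)
    rwa [Nat.count_one, if_pos (Set.mem_insert 0 X)] at this
  have h1 := Nat.count_le_iff_le_nth hinf (a := i + 1) (b := j)
  have h2 := Nat.count_le_iff_le_nth hinf (a := i + 1) (b := j + 1)
  rw [intvl, mem_Ico, blockIdx, nEnum, nEnum, ← not_lt, ← Nat.add_one_le_iff, ← h1,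
    ← Nat.add_one_le_iff, ← h2]
  omega

lemma blockIdx_monotone : Monotone (blockIdx X) := by
  classical
  exact fun a b hab =>
    Nat.sub_le_sub_right (Nat.count_monotone _ (Nat.add_le_add_right hab 1)) 1

lemma nEnum_mem_intvl (hX : X.Infinite) (j : ℕ) : nEnum X j ∈ intvl X j :=
  left_mem_Ico.mpr (nEnum_strictMono hX j.lt_succ_self)

lemma blockIdx_nEnum (hX : X.Infinite) (j : ℕ) : blockIdx X (nEnum X j) = j :=
  (mem_intvl_iff hX).mp (nEnum_mem_intvl hX j)

lemma nEnum_blockIdx {p : ℕ} (hX : X.Infinite) (hp : p ∈ insert 0 X) :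
    nEnum X (blockIdx X p) = p := by
  obtain ⟨j, -, rfl⟩ := Nat.exists_lt_card_nth_eq hp
  exact congrArg (nEnum X) (blockIdx_nEnum hX j)

lemma tendsto_blockIdx (hX : X.Infinite) : Tendsto (blockIdx X) atTop atTop :=
  tendsto_atTop_atTop_of_monotone blockIdx_monotone
    fun j => ⟨nEnum X j, (blockIdx_nEnum hX j).ge⟩

lemma intvl_union_intvl_succ (hX : X.Infinite) (j : ℕ) :
    intvl X j ∪ intvl X (j + 1) = Ico (nEnum X j) (nEnum X (j + 2)) :=
  Ico_union_Ico_eq_Ico ((nEnum_strictMono hX).monotone j.le_succ)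
    ((nEnum_strictMono hX).monotone (j + 1).le_succ)

end Blocks

section Refinement

variable {X X' : Set ℕ} {j k : ℕ}

/-- `I(X', k)` is the union of the `I(X, j)` with `cutIdx X X' k ≤ j < cutIdx X X' (k + 1)`. -/
def cutIdx (X X' : Set ℕ) (k : ℕ) : ℕ := blockIdx X (nEnum X' k)

lemma nEnum_cutIdx (hX : X.Infinite) (hX' : X'.Infinite) (hsub : X' ⊆ X) (k : ℕ) :
    nEnum X (cutIdx X X' k) = nEnum X' k :=
  nEnum_blockIdx hX (Set.insert_subset_insert hsub (nEnum_mem hX' k))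

lemma cutIdx_strictMono (hX : X.Infinite) (hX' : X'.Infinite) (hsub : X' ⊆ X) :
    StrictMono (cutIdx X X') := fun a b hab => by
  rw [← (nEnum_strictMono hX).lt_iff_lt, nEnum_cutIdx hX hX' hsub, nEnum_cutIdx hX hX' hsub]
  exact nEnum_strictMono hX' hab

lemma blockIdx_nEnum_eq_iff (hX : X.Infinite) (hX' : X'.Infinite) (hsub : X' ⊆ X) :
    blockIdx X' (nEnum X j) = k ↔ j ∈ Ico (cutIdx X X' k) (cutIdx X X' (k + 1)) := by
  rw [← mem_intvl_iff hX', intvl, mem_Ico, mem_Ico, ← nEnum_cutIdx hX hX' hsub,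
    ← nEnum_cutIdx hX hX' hsub, (nEnum_strictMono hX).le_iff_le, (nEnum_strictMono hX).lt_iff_lt]

lemma intvl_union_intvl_succ_subset (hX : X.Infinite) (hX' : X'.Infinite) (hsub : X' ⊆ X)
    (j : ℕ) :
    intvl X j ∪ intvl X (j + 1) ⊆
      intvl X' (blockIdx X' (nEnum X j)) ∪ intvl X' (blockIdx X' (nEnum X j) + 1) := by
  set k := blockIdx X' (nEnum X j) with hk
  have hj := mem_Ico.mp ((blockIdx_nEnum_eq_iff hX hX' hsub).mp hk.symm)
  have hcut := cutIdx_strictMono hX hX' hsub (show k + 1 < k + 2 by omega)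
  rw [intvl_union_intvl_succ hX, intvl_union_intvl_succ hX', ← nEnum_cutIdx hX hX' hsub,
    ← nEnum_cutIdx hX hX' hsub]
  exact Ico_subset_Ico ((nEnum_strictMono hX).monotone hj.1)
    ((nEnum_strictMono hX).monotone (by omega))

theorem memF_of_memF_of_subset (hX : X.Infinite) (hX' : X'.Infinite) (hsub : X' ⊆ X)
    {α : ℕ → Circle} (hα : memF X' α) : memF X α :=
  squeeze_zero (fun _ => Delta_nonneg)
    (fun j => Delta_mono (intvl_union_intvl_succ_subset hX hX' hsub j))
    (hα.comp ((tendsto_blockIdx hX').comp (nEnum_strictMono hX).tendsto_atTop))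

def cutGap (X X' : Set ℕ) (k : ℕ) : ℕ := cutIdx X X' (k + 1) - cutIdx X X' k

lemma exists_le_cutGap (hX : X.Infinite) (hX' : X'.Infinite) (hsub : X' ⊆ X)
    (hsparse : ∀ m : ℕ, ∃ k : ℕ, ∃ s : Finset ℕ, m ≤ s.card ∧
      ∀ j ∈ s, intvl X j ⊆ intvl X' k) (m : ℕ) :
    ∃ k, m ≤ cutGap X X' k := by
  obtain ⟨k, s, hm, hs⟩ := hsparse m
  refine ⟨k, hm.trans ?_⟩
  rw [cutGap, ← Nat.card_Ico]
  exact card_le_card fun j hj => (blockIdx_nEnum_eq_iff hX hX' hsub).mp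
    ((mem_intvl_iff hX').mp (hs j hj (nEnum_mem_intvl hX j)))

end Refinement

lemma tendsto_partialSups_atTop {g : ℕ → ℕ} (hg : ∀ m, ∃ k, m ≤ g k) :
    Tendsto (partialSups g) atTop atTop :=
  tendsto_atTop_atTop_of_monotone (partialSups g).monotone
    fun m => (hg m).imp fun k hk => hk.trans (le_partialSups g k)

lemma frequently_partialSups_eq {g : ℕ → ℕ} (hg : ∀ m, ∃ k, m ≤ g k) :
    ∃ᶠ k in atTop, partialSups g k = g k := by
  rw [frequently_atTop]
  intro N
  obtain ⟨k₁, hk₁⟩ := hg (partialSups g N + 1)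
  obtain ⟨k, hk, hmax⟩ := exists_partialSups_eq g k₁
  have hN : N < k := by
    by_contra! h
    have : g k ≤ partialSups g N := le_partialSups_of_le g h
    have : g k₁ ≤ g k := hmax ▸ le_partialSups g k₁
    omega
  exact ⟨k, hN.le, le_antisymm (hmax ▸ (partialSups g).monotone hk) (le_partialSups g k)⟩

section Phase

variable {X X' : Set ℕ}

def phase (X X' : Set ℕ) (j : ℕ) : ℝ :=
  ∑ i ∈ range j, π / partialSups (cutGap X X') (blockIdx X' (nEnum X i))

lemma tendsto_phase_succ_sub (hX : X.Infinite) (hX' : X'.Infinite)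
    (hgap : ∀ m, ∃ k, m ≤ cutGap X X' k) :
    Tendsto (fun j => phase X X' (j + 1) - phase X X' j) atTop (𝓝 0) := by
  simp only [phase, sum_range_succ_sub_sum]
  exact tendsto_const_nhds.div_atTop (tendsto_natCast_atTop_atTop.comp
    ((tendsto_partialSups_atTop hgap).comp
      ((tendsto_blockIdx hX').comp (nEnum_strictMono hX).tendsto_atTop)))

lemma phase_cutIdx_succ_sub (hX : X.Infinite) (hX' : X'.Infinite) (hsub : X' ⊆ X) (k : ℕ) :
    phase X X' (cutIdx X X' (k + 1)) - phase X X' (cutIdx X X' k) =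
      cutGap X X' k * (π / partialSups (cutGap X X') k) := by
  rw [phase, phase, ← sum_Ico_eq_sub _ ((cutIdx_strictMono hX hX' hsub).monotone k.le_succ),
    sum_congr rfl fun j hj => by rw [(blockIdx_nEnum_eq_iff hX hX' hsub).mpr hj], sum_const,
    Nat.card_Ico, nsmul_eq_mul, cutGap]

lemma frequently_phase_cutIdx_succ_sub_eq_pi (hX : X.Infinite) (hX' : X'.Infinite)
    (hsub : X' ⊆ X) (hgap : ∀ m, ∃ k, m ≤ cutGap X X' k) :
    ∃ᶠ k in atTop, phase X X' (cutIdx X X' (k + 1)) - phase X X' (cutIdx X X' k) = π := by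
  refine (frequently_partialSups_eq hgap).mono fun k hk => ?_
  have hgap : (cutGap X X' k : ℝ) ≠ 0 := Nat.cast_ne_zero.mpr
    (Nat.sub_pos_of_lt (cutIdx_strictMono hX hX' hsub k.lt_succ_self)).ne'
  rw [phase_cutIdx_succ_sub hX hX' hsub, hk, mul_div_cancel₀ _ hgap]

end Phase

section CircleExp

variable {X X' : Set ℕ}

lemma Delta_circleExp_comp_blockIdx_le (hX : X.Infinite) (φ : ℕ → ℝ) (j : ℕ) :
    Delta (intvl X j ∪ intvl X (j + 1)) (fun i => Circle.exp (φ (blockIdx X i))) 1 ≤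
      |φ (j + 1) - φ j| := by
  refine Delta_le (abs_nonneg _) fun a ha b hb => ?_
  have hblock :
      ∀ c ∈ intvl X j ∪ intvl X (j + 1), blockIdx X c = j ∨ blockIdx X c = j + 1 :=
    fun c hc => by simpa only [mem_union, mem_intvl_iff hX] using hc
  simp only [Pi.one_apply, Circle.coe_one, map_one, mul_one, coe_circleExp_mul_conj]
  refine (norm_coe_circleExp_sub_one_le _).trans ?_
  rcases hblock a ha with h | h <;> rcases hblock b hb with h' | h' <;>
    simp [h, h', abs_sub_comm]

lemma memF_circleExp_comp_blockIdx (hX : X.Infinite) {φ : ℕ → ℝ}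
    (hφ : Tendsto (fun j => φ (j + 1) - φ j) atTop (𝓝 0)) :
    memF X (fun i => Circle.exp (φ (blockIdx X i))) :=
  squeeze_zero (fun _ => Delta_nonneg) (Delta_circleExp_comp_blockIdx_le hX φ)
    (by simpa using hφ.abs)

lemma not_memF_circleExp_comp_blockIdx (hX' : X'.Infinite) {φ : ℕ → ℝ}
    (hφ : ∃ᶠ k in atTop, φ (cutIdx X X' (k + 1)) - φ (cutIdx X X' k) = π) :
    ¬ memF X' (fun i => Circle.exp (φ (blockIdx X i))) := by
  intro hmem
  have hlarge : ∃ᶠ k in atTop,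
      2 ≤ Delta (intvl X' k ∪ intvl X' (k + 1)) (fun i => Circle.exp (φ (blockIdx X i))) 1 :=
    hφ.mono fun k hk => by
      have hp := mem_union_left (intvl X' (k + 1)) (nEnum_mem_intvl hX' k)
      have hq := mem_union_right (intvl X' k) (nEnum_mem_intvl hX' (k + 1))
      refine le_of_eq_of_le ?_ (norm_sub_le_Delta hq hp)
      simp only [Pi.one_apply, Circle.coe_one, map_one, mul_one, coe_circleExp_mul_conj]
      rw [← cutIdx, ← cutIdx, hk, norm_coe_circleExp_pi_sub_one]
  obtain ⟨k, hk, hsmall⟩ :=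
    (hlarge.and_eventually (hmem.eventually (gt_mem_nhds two_pos))).exists
  linarith

end CircleExp

/-- if every `m` admits `k` with at least `m` of the intervals `I(X,j)`
contained in `I(X',k)`, then `F_{X'} ⊊ F_X`. -/
theorem F_proper (X X' : Set ℕ) (hX : X.Infinite) (hX' : X'.Infinite)
    (hsub : X' ⊆ X)
    (hsparse : ∀ m : ℕ, ∃ k : ℕ, ∃ s : Finset ℕ, m ≤ s.card ∧
      ∀ j ∈ s, intvl X j ⊆ intvl X' k) :
    (∀ α : ℕ → Circle, memF X' α → memF X α) ∧
      ∃ α : ℕ → Circle, memF X α ∧ ¬ memF X' α := by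
  have hgap : ∀ m, ∃ k, m ≤ cutGap X X' k := exists_le_cutGap hX hX' hsub hsparse
  exact ⟨fun _ => memF_of_memF_of_subset hX hX' hsub, _,
    memF_circleExp_comp_blockIdx hX (tendsto_phase_succ_sub hX hX' hgap),
    not_memF_circleExp_comp_blockIdx hX'
      (frequently_phase_cutIdx_succ_sub_eq_pi hX hX' hsub hgap)⟩
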